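/- arXiv:2407.03048 — 4 statements merged into one kernel-verified Lean document; each statement's English description precedes it below -/
import Mathlib

section
/- Every finitely generated ideal of the ring of adeles of a number field (the restricted product of the completions K_v with respect to the rings of integers O_v over all places) is principal; in particular the Picard group of the adele ring is trivial. -/
/-!
A ring is Bézout as soon as any two elements `a, b` have a common divisor lying in the ideal
`(a, b)`. Checking this componentwise shows that products of Bézout rings (e.g. of fields) are
Bézout.
In a restricted product of fields `F_v` with respect to valuation rings `O_v`, take `c_v` to be
whichever of `a_v, b_v` has the larger valuation: then `a_v / c_v, b_v / c_v ∈ O_v` at every place,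
and `c = e a + (1 - e) b` for the idempotent `e` selecting the places where `c_v = a_v`. The adele
ring is the product of the infinite adeles (a product of fields) and the finite adeles (such a
restricted product), so it is Bézout.
-/

open NumberField IsDedekindDomain

theorem IsBezout.of_exists_dvd_mem_span {R : Type*} [CommRing R]
    (h : ∀ a b : R, ∃ c, c ∣ a ∧ c ∣ b ∧ c ∈ Ideal.span {a, b}) : IsBezout R := by
  refine IsBezout.iff_span_pair_isPrincipal.2 fun a b => ?_
  obtain ⟨c, hca, hcb, hc⟩ := h a b
  refine ⟨c, le_antisymm ?_ ((Submodule.span_singleton_le_iff_mem _ _).2 hc)⟩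
  rw [Ideal.span_le, Set.pair_subset_iff]
  exact ⟨Ideal.mem_span_singleton.2 hca, Ideal.mem_span_singleton.2 hcb⟩

instance Pi.isBezout {ι : Type*} {R : ι → Type*} [∀ i, CommRing (R i)] [∀ i, IsBezout (R i)] :
    IsBezout (∀ i, R i) := by
  refine .of_exists_dvd_mem_span fun a b => ⟨fun i => IsBezout.gcd (a i) (b i),
    pi_dvd_iff.2 fun i => IsBezout.gcd_dvd_left _ _,
    pi_dvd_iff.2 fun i => IsBezout.gcd_dvd_right _ _, ?_⟩
  choose u w h using fun i => IsBezout.gcd_eq_sum (a i) (b i)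
  exact Ideal.mem_span_pair.2 ⟨u, w, funext h⟩

instance Prod.isBezout {R S : Type*} [CommRing R] [CommRing S] [IsBezout R] [IsBezout S] :
    IsBezout (R × S) := by
  refine .of_exists_dvd_mem_span fun a b => ⟨(IsBezout.gcd a.1 b.1, IsBezout.gcd a.2 b.2),
    prod_dvd_iff.2 ⟨IsBezout.gcd_dvd_left _ _, IsBezout.gcd_dvd_left _ _⟩,
    prod_dvd_iff.2 ⟨IsBezout.gcd_dvd_right _ _, IsBezout.gcd_dvd_right _ _⟩, ?_⟩
  obtain ⟨u₁, w₁, h₁⟩ := IsBezout.gcd_eq_sum a.1 b.1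
  obtain ⟨u₂, w₂, h₂⟩ := IsBezout.gcd_eq_sum a.2 b.2
  exact Ideal.mem_span_pair.2 ⟨(u₁, u₂), (w₁, w₂), Prod.ext h₁ h₂⟩

namespace RestrictedProduct

variable {ι : Type*} {F : ι → Type*} [∀ i, Field (F i)] {A : ∀ i, ValuationSubring (F i)}
  {𝓕 : Filter ι}

theorem dvd_of_forall_valuation_le {a c : Πʳ i, [F i, A i]_[𝓕]}
    (h : ∀ i, (A i).valuation (a i) ≤ (A i).valuation (c i)) : c ∣ a := by
  choose u hu using fun i => ((A i).valuation_le_iff _ _).1 (h i)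
  exact ⟨structureMap F (fun i => A i) 𝓕 u, by ext i; simp [hu, mul_comm]⟩

instance isBezout_of_valuationSubring : IsBezout (Πʳ i, [F i, A i]_[𝓕]) := by
  refine .of_exists_dvd_mem_span fun a b => ?_
  let e : Πʳ i, [F i, A i]_[𝓕] := structureMap F (fun i => A i) 𝓕 fun i =>
    if (A i).valuation (b i) ≤ (A i).valuation (a i) then 1 else 0
  have he : ∀ i, (e * a + (1 - e) * b) i =
      if (A i).valuation (b i) ≤ (A i).valuation (a i) then a i else b i := by
    intro i
    by_cases h : (A i).valuation (b i) ≤ (A i).valuation (a i) <;> simp [e, h]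
  refine ⟨e * a + (1 - e) * b, dvd_of_forall_valuation_le fun i => ?_,
    dvd_of_forall_valuation_le fun i => ?_, Ideal.mem_span_pair.2 ⟨e, 1 - e, rfl⟩⟩
  · rw [he]
    split_ifs with h
    exacts [le_rfl, (not_le.1 h).le]
  · rw [he]
    split_ifs with h
    exacts [h, le_rfl]

end RestrictedProduct

instance FiniteAdeleRing.isBezout (R K : Type*) [CommRing R] [IsDedekindDomain R] [Field K]
    [Algebra R K] [IsFractionRing R K] : IsBezout (FiniteAdeleRing R K) :=
  RestrictedProduct.isBezout_of_valuationSubring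

instance InfiniteAdeleRing.isBezout (K : Type*) [Field K] : IsBezout (InfiniteAdeleRing K) :=
  Pi.isBezout

instance AdeleRing.isBezout (R K : Type*) [CommRing R] [IsDedekindDomain R] [Field K]
    [Algebra R K] [IsFractionRing R K] : IsBezout (AdeleRing R K) :=
  Prod.isBezout

theorem adele_ring_fg_ideal_isPrincipal (K : Type*) [Field K] [NumberField K]
    (I : Ideal (NumberField.AdeleRing (NumberField.RingOfIntegers K) K)) (hI : I.FG) : I.IsPrincipal :=
  IsBezout.isPrincipal_of_FG I hI
end

section
/- Let I be an index set and for each i ∈ I let X_i be a topological space with subspaces Z_i ⊆ Y_i ⊆ X_i. If the restricted product ∏(X_i, Z_i) is nonempty, then the natural inclusion ∏(X_i, Z_i) ↪ ∏(X_i, Y_i) is continuous with dense image. -/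
/-!
STATEMENT 1: Let `I` be an index set and for each `i ∈ I` let `X_i` be a
topological space with subspaces `Z_i ⊆ Y_i ⊆ X_i`.  If the restricted product
`∏(X_i, Z_i)` is nonempty, then the natural inclusion `∏(X_i, Z_i) ↪ ∏(X_i, Y_i)`
is continuous with dense image.
-/

/-- The restricted product of the spaces `X i` with respect to the subsets `U i`:
tuples `(x i)` with `x i ∈ U i` for all but finitely many `i`. -/
def RestrictedProduct' {I : Type*} (X : I → Type*) (U : (i : I) → Set (X i)) : Type _ :=
  {x : (i : I) → X i // ∀ᶠ i in Filter.cofinite, x i ∈ U i}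

/-- The restricted product topology: the finest topology such that for every finite
`J ⊆ I` the inclusion of `∏_{i ∈ J} X i × ∏_{i ∉ J} U i` (with the product
topology) is continuous. -/
instance restrictedProductTopology {I : Type*} (X : I → Type*)
    [∀ i, TopologicalSpace (X i)] (U : (i : I) → Set (X i)) :
    TopologicalSpace (RestrictedProduct' X U) :=
  ⨆ J : Finset I,
    TopologicalSpace.coinduced
      (fun x : {x : (i : I) → X i // ∀ i ∉ J, x i ∈ U i} =>
        (⟨x.1, by
          rw [Filter.eventually_cofinite]
          exact J.finite_toSet.subset fun i hi => by
            by_contra h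
            exact hi (x.2 i h)⟩ : RestrictedProduct' X U))
      inferInstance

/-!
The restricted product topology is finer than the subspace topology from `∏ i, X i`, since
each of the pieces it is coinduced from carries a subspace topology of the product. For
density, a neighbourhood of `y` in the product constrains only finitely many coordinates, so
agreeing with `y` on a finite set `J` and with a fixed `z ∈ ∏(X_i, Z_i)` off `J` lands in it.
-/

open Filter Topology

section

variable {I : Type*} {X : I → Type*} [∀ i, TopologicalSpace (X i)]

theorem dense_setOf_eventually_cofinite_mem {Z : (i : I) → Set (X i)} {z : (i : I) → X i}
    (hz : ∀ᶠ i in cofinite, z i ∈ Z i) :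
    Dense {x : (i : I) → X i | ∀ᶠ i in cofinite, x i ∈ Z i} := by
  classical
  refine fun y => mem_closure_iff_nhds.2 fun s hs => ?_
  obtain ⟨J, hJ⟩ := exists_finset_piecewise_mem_of_mem_nhds hs z
  refine ⟨J.piecewise y z, hJ, ?_⟩
  filter_upwards [J.finite_toSet.eventually_cofinite_notMem, hz] with i hi hzi
  rwa [J.piecewise_eq_of_notMem _ _ hi]

theorem RestrictedProduct'.continuous_val (U : (i : I) → Set (X i)) :
    Continuous fun x : RestrictedProduct' X U => x.1 :=
  continuous_iSup_dom.2 fun _ => continuous_coinduced_dom.2 continuous_subtype_val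

end

theorem restrictedProduct_inclusion_continuous_denseRange
    {I : Type*} (X : I → Type*) [∀ i, TopologicalSpace (X i)]
    (Y Z : (i : I) → Set (X i)) (hZY : ∀ i, Z i ⊆ Y i)
    (hne : Nonempty (RestrictedProduct' X Z)) :
    Continuous (fun x : RestrictedProduct' X Z =>
      (⟨x.1, x.2.mono fun i hi => hZY i hi⟩ : RestrictedProduct' X Y)) ∧
    DenseRange (fun x : RestrictedProduct' X Z =>
      (⟨x.1, x.2.mono fun i hi => hZY i hi⟩ : RestrictedProduct' X Y)) := by
  obtain ⟨z⟩ := hne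
  refine ⟨(RestrictedProduct'.continuous_val Z).subtype_mk _, ?_⟩
  have hsub : {x : (i : I) → X i | ∀ᶠ i in cofinite, x i ∈ Z i} ⊆
      {x | ∀ᶠ i in cofinite, x i ∈ Y i} :=
    Set.ofPred_subset_ofPred.2 fun _ hx => hx.mono fun i hi => hZY i hi
  have hdense := dense_setOf_eventually_cofinite_mem z.2
  exact (denseRange_inclusion_iff hsub).2 (hdense.closure_eq ▸ Set.subset_univ _)
end

section
/- If K is a number field, then for every prime number p there exist infinitely many finite places v of K such that the unit group O_v^× of the completion's valuation ring is not p-divisible. Consequently ρ(K) = {1}, i.e., the only positive integer n such that x ↦ x^n is surjective on O_v^× for all places v is n = 1. -/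
/-!
Reduction `O_v^× → k_v^×` onto the units of the residue field is surjective, so if `x ↦ x^p` is
onto `O_v^×` it is onto the finite group `k_v^×`, and then `p ∤ #k_v^×`. Since `𝓞 K` is dense in
`O_v`, `k_v` is a quotient of `𝓞 K ⧸ v`; so when `v` lies above a prime `q ≡ 1 mod p`, `k_v` is a
finite field of order `q^f ≡ 1 mod p`, and `p ∣ #k_v^×`. By Dirichlet there are infinitely many
such `q`, each below some `v`. Finally, any `n ≠ 1` has a prime factor `p`, and if `x ↦ x^n` is
onto then so is `x ↦ x^p`.
-/

open IsDedekindDomain IsDedekindDomain.HeightOneSpectrum NumberField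

theorem surjective_pow_of_dvd {M : Type*} [Monoid M] {m n : ℕ} (hmn : m ∣ n)
    (h : Function.Surjective fun x : M => x ^ n) : Function.Surjective fun x : M => x ^ m := by
  obtain ⟨k, rfl⟩ := hmn
  intro y
  obtain ⟨x, rfl⟩ := h y
  exact ⟨x ^ k, by dsimp only; rw [← pow_mul, mul_comm]⟩

theorem not_surjective_pow_of_prime_dvd_card {G : Type*} [Group G] [Finite G] {p : ℕ}
    (hp : p.Prime) (hdvd : p ∣ Nat.card G) : ¬ Function.Surjective fun x : G => x ^ p := by
  have := Fact.mk hp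
  obtain ⟨g, hg⟩ := exists_prime_orderOf_dvd_card' p hdvd
  rw [← Finite.injective_iff_surjective]
  intro hinj
  have hg1 : g = 1 := hinj (by simp only [← hg, pow_orderOf_eq_one, one_pow])
  exact hp.ne_one (by rw [← hg, hg1, orderOf_one])

theorem Function.Surjective.surjective_pow {G H : Type*} [Monoid G] [Monoid H] {f : G →* H}
    (hf : Function.Surjective f) {n : ℕ} (hG : Function.Surjective fun x : G => x ^ n) :
    Function.Surjective fun y : H => y ^ n := by
  intro y
  obtain ⟨x, rfl⟩ := hf y
  obtain ⟨z, rfl⟩ := hG x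
  exact ⟨f z, (map_pow f z n).symm⟩

theorem FiniteField.dvd_card_units_of_ringChar_modEq_one {F : Type*} [Field F] [Finite F]
    {p : ℕ} (h : ringChar F ≡ 1 [MOD p]) : p ∣ Nat.card Fˣ := by
  have := Fintype.ofFinite F
  obtain ⟨n, hchar, hcard⟩ := FiniteField.card F (ringChar F)
  rw [Nat.card_units, Nat.card_eq_fintype_card, hcard]
  exact (Nat.modEq_iff_dvd' (Nat.one_le_pow _ _ hchar.pos)).mp (by simpa using (h.pow n).symm)

theorem IsLocalRing.not_surjective_pow_units {A : Type*} [CommRing A] [IsLocalRing A]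
    [Finite (IsLocalRing.ResidueField A)] {p : ℕ} (hp : p.Prime)
    (h : ringChar (IsLocalRing.ResidueField A) ≡ 1 [MOD p]) :
    ¬ Function.Surjective fun x : Aˣ => x ^ p := fun hA =>
  not_surjective_pow_of_prime_dvd_card hp (FiniteField.dvd_card_units_of_ringChar_modEq_one h)
    ((IsLocalRing.surjective_units_map_of_local_ringHom _ IsLocalRing.residue_surjective
      inferInstance).surjective_pow hA)

theorem exists_heightOneSpectrum_natCast_mem {R : Type*} [CommRing R] [CharZero R]
    [Algebra.IsIntegral ℤ R] {q : ℕ} (hq : q.Prime) :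
    ∃ v : HeightOneSpectrum R, (q : R) ∈ v.asIdeal := by
  have : (Ideal.span {(q : ℤ)}).IsPrime :=
    (Ideal.span_singleton_prime (by exact_mod_cast hq.ne_zero)).mpr (Nat.prime_iff_prime_int.mp hq)
  obtain ⟨⟨P, hP, hPq⟩⟩ := (Ideal.span {(q : ℤ)}).nonempty_primesOver (S := R)
  refine ⟨⟨P, hP, Ideal.ne_bot_of_mem_primesOver ?_ ⟨hP, hPq⟩⟩, ?_⟩
  · simpa using hq.ne_zero
  · simpa using (Ideal.mem_of_liesOver P _ (q : ℤ)).mp (Ideal.mem_span_singleton_self _)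

namespace IsDedekindDomain.HeightOneSpectrum

variable {R : Type*} [CommRing R] [IsDedekindDomain R] {K : Type*} [Field K] [Algebra R K]
  [IsFractionRing R K] (v : HeightOneSpectrum R)

theorem exists_valued_sub_coe_lt_one (x : v.adicCompletion K) :
    ∃ b : K, Valued.v (x - b) < 1 := by
  have hball : {y : v.adicCompletion K | Valued.v (x - y) < 1} ∈ nhds x := by
    rw [Valued.mem_nhds]
    refine ⟨1, fun y hy => ?_⟩
    simpa [Valuation.map_sub_swap] using hy
  exact (denseRange_algebraMap K v).mem_nhds hball

theorem exists_valued_sub_algebraMap_lt_one (x : v.adicCompletionIntegers K) :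
    ∃ r : R, Valued.v ((x : v.adicCompletion K) - (algebraMap R K r : K)) < 1 := by
  obtain ⟨b, hb⟩ := v.exists_valued_sub_coe_lt_one (x : v.adicCompletion K)
  have hb1 : v.valuation K b ≤ 1 := by
    rw [← valuedAdicCompletion_eq_valuation', ← sub_sub_cancel (x : v.adicCompletion K) b]
    exact Valuation.map_sub_le _ x.2 hb.le
  obtain ⟨r, hr⟩ := v.exists_valuation_sub_lt_of_integer hb1 1
  have hcoe : ((algebraMap R K r - b : K) : v.adicCompletion K) =
      (algebraMap R K r : K) - (b : v.adicCompletion K) :=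
    map_sub (algebraMap K (v.adicCompletion K)) _ _
  rw [← valuedAdicCompletion_eq_valuation', hcoe] at hr
  refine ⟨r, ?_⟩
  rw [← sub_sub_sub_cancel_right _ _ (b : v.adicCompletion K)]
  exact Valuation.map_sub_lt _ hb (by simpa using hr)

theorem mem_maximalIdeal_adicCompletionIntegers_iff {x : v.adicCompletionIntegers K} :
    x ∈ IsLocalRing.maximalIdeal (v.adicCompletionIntegers K) ↔
      Valued.v (x : v.adicCompletion K) < 1 :=
  Valuation.mem_maximalIdeal_iff (K := v.adicCompletion K) Valued.v

theorem algebraMap_mem_maximalIdeal_adicCompletionIntegers {r : R} (hr : r ∈ v.asIdeal) :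
    algebraMap R (v.adicCompletionIntegers K) r ∈
      IsLocalRing.maximalIdeal (v.adicCompletionIntegers K) := by
  rw [mem_maximalIdeal_adicCompletionIntegers_iff]
  change Valued.v ((algebraMap R K r : K) : v.adicCompletion K) < 1
  rw [valuedAdicCompletion_eq_valuation', valuation_of_algebraMap]
  exact (v.intValuation_lt_one_iff_mem r).mpr hr

variable (K) in
noncomputable def toAdicCompletionResidueField :
    R →+* IsLocalRing.ResidueField (v.adicCompletionIntegers K) :=
  (IsLocalRing.residue _).comp (algebraMap R (v.adicCompletionIntegers K))

theorem toAdicCompletionResidueField_eq_zero {r : R} (hr : r ∈ v.asIdeal) :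
    v.toAdicCompletionResidueField K r = 0 :=
  (IsLocalRing.residue_eq_zero_iff _).mpr (v.algebraMap_mem_maximalIdeal_adicCompletionIntegers hr)

theorem surjective_toAdicCompletionResidueField :
    Function.Surjective (v.toAdicCompletionResidueField K) := by
  intro y
  obtain ⟨x, rfl⟩ := IsLocalRing.residue_surjective y
  obtain ⟨r, hr⟩ := v.exists_valued_sub_algebraMap_lt_one x
  refine ⟨r, ?_⟩
  rw [toAdicCompletionResidueField, RingHom.comp_apply, eq_comm, ← sub_eq_zero, ← map_sub,
    IsLocalRing.residue_eq_zero_iff, mem_maximalIdeal_adicCompletionIntegers_iff]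
  exact hr

instance finite_residueField_adicCompletionIntegers [Finite (R ⧸ v.asIdeal)] :
    Finite (IsLocalRing.ResidueField (v.adicCompletionIntegers K)) :=
  Finite.of_surjective _ (Ideal.Quotient.lift_surjective_of_surjective v.asIdeal
    (fun _ => v.toAdicCompletionResidueField_eq_zero) v.surjective_toAdicCompletionResidueField)

theorem ringChar_residueField_adicCompletionIntegers {q : ℕ} (hq : q.Prime)
    (hqv : (q : R) ∈ v.asIdeal) :
    ringChar (IsLocalRing.ResidueField (v.adicCompletionIntegers K)) = q := by
  have : CharP (IsLocalRing.ResidueField (v.adicCompletionIntegers K)) q := by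
    rw [CharP.charP_iff_prime_eq_zero hq, ← map_natCast (v.toAdicCompletionResidueField K)]
    exact v.toAdicCompletionResidueField_eq_zero hqv
  exact ringChar.eq _ q

theorem not_surjective_pow_units_adicCompletionIntegers [Finite (R ⧸ v.asIdeal)] {p q : ℕ}
    (hp : p.Prime) (hq : q.Prime) (hqp : q ≡ 1 [MOD p]) (hqv : (q : R) ∈ v.asIdeal) :
    ¬ Function.Surjective fun x : (v.adicCompletionIntegers K)ˣ => x ^ p :=
  IsLocalRing.not_surjective_pow_units hp
    (by rwa [v.ringChar_residueField_adicCompletionIntegers hq hqv])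

end IsDedekindDomain.HeightOneSpectrum

theorem NumberField.setOf_not_surjective_pow_units_infinite (K : Type*) [Field K]
    [NumberField K] {p : ℕ} (hp : p.Prime) :
    {v : HeightOneSpectrum (𝓞 K) |
        ¬ Function.Surjective fun x : (v.adicCompletionIntegers K)ˣ => x ^ p}.Infinite := by
  refine Set.Infinite.of_image
    (fun v => ringChar (IsLocalRing.ResidueField (v.adicCompletionIntegers K)))
    ((Nat.infinite_setOfPred_prime_modEq_one hp.ne_zero).mono ?_)
  rintro q ⟨hq, hqp⟩
  obtain ⟨v, hqv⟩ := exists_heightOneSpectrum_natCast_mem (R := 𝓞 K) hq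
  exact ⟨v, v.not_surjective_pow_units_adicCompletionIntegers hp hq hqp hqv,
    v.ringChar_residueField_adicCompletionIntegers hq hqv⟩

theorem numberField_units_not_p_divisible_infinite_and_rho_trivial
    (K : Type*) [Field K] [NumberField K] (p : ℕ) (hp : p.Prime) :
    {v : HeightOneSpectrum (NumberField.RingOfIntegers K) |
        ¬ Function.Surjective fun x : (↥(v.adicCompletionIntegers K))ˣ => x ^ p}.Infinite ∧
    ∀ n : ℕ, 0 < n →
      (∀ v : HeightOneSpectrum (NumberField.RingOfIntegers K),
        Function.Surjective fun x : (↥(v.adicCompletionIntegers K))ˣ => x ^ n) → n = 1 := by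
  refine ⟨setOf_not_surjective_pow_units_infinite K hp, fun n _ hsurj => ?_⟩
  by_contra hn
  obtain ⟨r, hr, hrn⟩ := Nat.exists_prime_and_dvd hn
  obtain ⟨v, hv⟩ := (setOf_not_surjective_pow_units_infinite K hr).nonempty
  exact hv (surjective_pow_of_dvd hrn (hsurj v))
end

section
/- Let 0 → N^∨ → ℤ^n → Q → 0 be a short exact sequence of abelian groups with N^∨ a finite free ℤ-module embedded via m ↦ (⟨m, v_i⟩)_{i=1,…,n} for vectors v_1,…,v_n in the dual lattice N. Then Q is torsion-free if and only if v_1,…,v_n generate N as a ℤ-module. -/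
/-!
STATEMENT 15: Let `0 → N^∨ → ℤ^n → Q → 0` be a short exact sequence of abelian
groups, where `N` is a finite free `ℤ`-module and `N^∨ = Hom(N, ℤ)` is embedded via
`m ↦ (⟨m, v_i⟩)_{i=1,…,n}` for vectors `v_1,…,v_n ∈ N`.  Then `Q` is torsion-free if
and only if `v_1,…,v_n` generate `N` as a `ℤ`-module.
-/

/-- The map `N^∨ → ℤ^n`, `m ↦ (⟨m, v_i⟩)_i`. -/
def dualPairingMap {ι N : Type*} [AddCommGroup N] [Module ℤ N] (v : ι → N) :
    Module.Dual ℤ N →ₗ[ℤ] (ι → ℤ) where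
  toFun m := fun i => m (v i)
  map_add' x y := by funext i; simp
  map_smul' c x := by funext i; simp

/-! By exactness, `Q` is torsion-free iff the image of `N^∨` in `ℤ^n` is saturated. Given
injectivity, this says: whenever `c` divides `⟨m, v_i⟩` for all `i`, it divides `⟨m, y⟩` for all
`y ∈ N` (for `c = 0` this is injectivity itself). Over a PID this divisibility test detects the
submodules equal to the whole finite free module: in a Smith normal form `bN i = a i • bM (f i)`
of `span {v_i} ⊆ N`, the coordinate functionals of `bM` tested with `c = 0` show that `f` is onto,
and tested with `c = a i` that each `a i` is a unit. -/

theorem AddMonoidHom.torsionFree_iff_of_surjective {A Q : Type*} [AddCommGroup A]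
    [AddCommGroup Q] {g : A →+ Q} (hg : Function.Surjective g) :
    (∀ (q : Q) (c : ℤ), c ≠ 0 → c • q = 0 → q = 0) ↔
      ∀ (x : A) (c : ℤ), c ≠ 0 → g (c • x) = 0 → g x = 0 := by
  simp only [hg.forall, map_zsmul]

namespace Module.Dual

variable {R M : Type*} [CommSemiring R] [AddCommMonoid M] [Module R M]

theorem dvd_apply_of_mem_span {s : Set M} {c : R} (φ : Module.Dual R M)
    (h : ∀ y ∈ s, c ∣ φ y) {y : M} (hy : y ∈ Submodule.span R s) : c ∣ φ y := by
  have hle : Submodule.span R s ≤ Submodule.comap φ (Ideal.span {c}) :=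
    Submodule.span_le.mpr fun y hy => Ideal.mem_span_singleton.mpr (h y hy)
  exact Ideal.mem_span_singleton.mp (hle hy)

theorem exists_eq_smul_of_forall_dvd [IsDomain R] (φ : Module.Dual R M) {c : R} (hc : c ≠ 0)
    (h : ∀ y, c ∣ φ y) : ∃ ψ : Module.Dual R M, φ = c • ψ := by
  choose ψ hψ using h
  refine ⟨{ toFun := ψ, map_add' := fun y z => ?_, map_smul' := fun r y => ?_ }, ?_⟩
  · exact mul_left_cancel₀ hc (by rw [mul_add, ← hψ, ← hψ, ← hψ, map_add])
  · exact mul_left_cancel₀ hc (by rw [RingHom.id_apply, smul_eq_mul, mul_left_comm, ← hψ, ← hψ,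
      map_smul, smul_eq_mul])
  · ext y
    exact hψ y

end Module.Dual

namespace Submodule

variable {R M : Type*} [CommRing R] [IsDomain R] [IsPrincipalIdealRing R] [AddCommGroup M]
  [Module R M] [Module.Free R M] [Module.Finite R M]

theorem eq_top_of_forall_dvd {N : Submodule R M}
    (h : ∀ (φ : Module.Dual R M) (c : R), (∀ y ∈ N, c ∣ φ y) → ∀ y, c ∣ φ y) : N = ⊤ := by
  obtain ⟨n, snf⟩ := N.smithNormalForm (Module.Free.chooseBasis R M)
  have hf : ∀ j, j ∈ Set.range snf.f := by
    intro j
    by_contra hj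
    have := h (snf.bM.coord j) 0
      (fun y hy => zero_dvd_iff.mpr (snf.le_ker_coord_of_notMem_range hj hy)) (snf.bM j)
    simp at this
  have ha : ∀ i, IsUnit (snf.a i) := fun i => isUnit_of_dvd_one <| by
    simpa using h (snf.bM.coord (snf.f i)) (snf.a i)
      (fun y hy => ⟨snf.bN.coord i ⟨y, hy⟩,
        LinearMap.congr_fun snf.coord_apply_embedding_eq_smul_coord ⟨y, hy⟩⟩)
      (snf.bM (snf.f i))
  rw [eq_top_iff, ← snf.bM.span_eq, span_le]
  rintro _ ⟨j, rfl⟩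
  obtain ⟨i, rfl⟩ := hf j
  exact (N.smul_mem_iff_of_isUnit (ha i)).mp (snf.snf i ▸ (snf.bN i).2)

theorem span_eq_top_iff_forall_dvd {s : Set M} :
    span R s = ⊤ ↔ ∀ (φ : Module.Dual R M) (c : R), (∀ y ∈ s, c ∣ φ y) → ∀ y, c ∣ φ y :=
  ⟨fun hs φ _ h _ => φ.dvd_apply_of_mem_span h (hs ▸ mem_top),
    fun h => eq_top_of_forall_dvd fun φ c hc => h φ c fun y hy => hc y (subset_span hy)⟩

end Submodule

theorem range_dualPairingMap_saturated_iff {ι N : Type*} [AddCommGroup N] [Module ℤ N]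
    [Module.Free ℤ N] [Module.Finite ℤ N] {v : ι → N}
    (hinj : Function.Injective (dualPairingMap v)) :
    (∀ (x : ι → ℤ) (c : ℤ), c ≠ 0 →
      c • x ∈ LinearMap.range (dualPairingMap v) → x ∈ LinearMap.range (dualPairingMap v)) ↔
      Submodule.span ℤ (Set.range v) = ⊤ := by
  simp only [Submodule.span_eq_top_iff_forall_dvd, Set.forall_mem_range]
  constructor
  · intro hsat φ c hdvd y
    obtain ⟨x, hx⟩ : ∃ x, dualPairingMap v φ = c • x :=
      ⟨fun i => (hdvd i).choose, funext fun i => (hdvd i).choose_spec⟩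
    rcases eq_or_ne c 0 with rfl | hc0
    · rw [zero_smul, ← map_zero (dualPairingMap v)] at hx
      simp [hinj hx]
    · obtain ⟨ψ, hψ⟩ := hsat x c hc0 ⟨φ, hx⟩
      obtain rfl : φ = c • ψ := hinj (by rw [map_smul, hψ, hx])
      exact ⟨ψ y, rfl⟩
  · rintro hdvd x c hc0 ⟨φ, hφ⟩
    obtain ⟨ψ, rfl⟩ := φ.exists_eq_smul_of_forall_dvd hc0 (hdvd φ c fun i => ⟨x i, congr_fun hφ i⟩)
    exact ⟨ψ, smul_right_injective _ hc0 (by simpa only [map_smul] using hφ)⟩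

theorem torsionFree_cokernel_iff_span
    (n : ℕ) (N : Type*) [AddCommGroup N] [Module ℤ N]
    [Module.Free ℤ N] [Module.Finite ℤ N]
    (v : Fin n → N)
    (Q : Type*) [AddCommGroup Q] (g : (Fin n → ℤ) →+ Q)
    -- exactness of `0 → N^∨ → ℤ^n → Q → 0`:
    (hinj : Function.Injective (dualPairingMap v))
    (hsurj : Function.Surjective g)
    (hexact : ∀ x : Fin n → ℤ, g x = 0 ↔ ∃ m : Module.Dual ℤ N, dualPairingMap v m = x) :
    (∀ (q : Q) (c : ℤ), c ≠ 0 → c • q = 0 → q = 0) ↔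
      Submodule.span ℤ (Set.range v) = ⊤ := by
  rw [AddMonoidHom.torsionFree_iff_of_surjective hsurj]
  simp only [hexact, ← LinearMap.mem_range]
  exact range_dualPairingMap_saturated_iff hinj
end
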